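/- In the chore (cost) setting, an allocation rule x admits a payment scheme p such that the mechanism (x,p) is truthful if and only if x satisfies the monotonicity property: x_i(a, s_{-i}) ≤ x_i(b, s_{-i}) for all agents i, all s_{-i} ∈ [k]^{n-1}, and all a,b ∈ [k] with c_i(a, s_{-i}) > c_i(b, s_{-i}). -/

import Mathlib

/-!
Fix an agent and the signals of the others; the problem becomes one-dimensional, with cost
`C a` and allocation `X a` at the agent's own signal `a`. In terms of the utility
`U a = P a - X a * C a`, incentive compatibility reads `U b + X b * (C b - C a) ≤ U a`.
Adding this for `(a, b)` and `(b, a)` gives `(X a - X b) * (C a - C b) ≤ 0`, i.e. monotonicity.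

Conversely, build `U` by inserting the signals in increasing order of cost, ties broken by
decreasing allocation. The new signal has the largest cost and the smallest allocation seen so
far, which is exactly what makes the interval of admissible utilities for it nonempty. Shifting
`U` by a constant makes it nonnegative, and `P = U + X * C` is then a truthful payment.
-/

open Function

section SingleAgent

variable {ι : Type*} {C X : ι → ℝ}

variable (C X) in
def IsTruthfulUtilityOn (S : Finset ι) (U : ι → ℝ) : Prop :=
  ∀ a ∈ S, ∀ b ∈ S, U b + X b * (C b - C a) ≤ U a

theorem IsTruthfulUtilityOn.exists_insert [DecidableEq ι] {S : Finset ι} {U : ι → ℝ}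
    (hU : IsTruthfulUtilityOn C X S U) {a : ι} (ha : a ∉ S)
    (hC : ∀ b ∈ S, C b ≤ C a) (hX : ∀ b ∈ S, X a ≤ X b) :
    ∃ V, IsTruthfulUtilityOn C X (insert a S) V := by
  rcases S.eq_empty_or_nonempty with rfl | hS
  · exact ⟨U, by simp [IsTruthfulUtilityOn]⟩
  -- the largest utility at `a` that keeps every `b ∈ S` from reporting `a`
  obtain ⟨b₀, hb₀, hmin⟩ := S.exists_min_image (fun b => U b - X a * (C a - C b)) hS
  refine ⟨update U a (U b₀ - X a * (C a - C b₀)), ?_⟩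
  have hne : ∀ b ∈ S, b ≠ a := fun b hb h => ha (h ▸ hb)
  intro d hd e he
  obtain rfl | hdS := Finset.mem_insert.1 hd
  · obtain rfl | heS := Finset.mem_insert.1 he
    · simp
    simp only [update_self, update_of_ne (hne e heS)]
    nlinarith [hU b₀ hb₀ e heS,
      mul_le_mul_of_nonneg_right (hX e heS) (sub_nonneg.2 (hC b₀ hb₀))]
  · obtain rfl | heS := Finset.mem_insert.1 he
    · simp only [update_self, update_of_ne (hne d hdS)]
      linarith [hmin d hdS]
    simp only [update_of_ne (hne d hdS), update_of_ne (hne e heS)]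
    exact hU d hdS e heS

theorem exists_isTruthfulUtilityOn (hmono : ∀ a b, C b < C a → X a ≤ X b) (S : Finset ι) :
    ∃ U, IsTruthfulUtilityOn C X S U := by
  classical
  induction S using Finset.induction_on_max_value (fun a => toLex (C a, -X a)) with
  | empty => exact ⟨0, by simp [IsTruthfulUtilityOn]⟩
  | insert a S ha hmax ih =>
    obtain ⟨U, hU⟩ := ih
    have hCX : ∀ b ∈ S, C b ≤ C a ∧ X a ≤ X b := by
      intro b hb
      rcases Prod.Lex.toLex_le_toLex.1 (hmax b hb) with h | ⟨h, h'⟩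
      · exact ⟨h.le, hmono a b h⟩
      · exact ⟨h.le, neg_le_neg_iff.1 h'⟩
    exact hU.exists_insert ha (fun b hb => (hCX b hb).1) (fun b hb => (hCX b hb).2)

theorem exists_nonneg_truthful_utility [Finite ι] (hmono : ∀ a b, C b < C a → X a ≤ X b) :
    ∃ U : ι → ℝ, (∀ a, 0 ≤ U a) ∧ ∀ a b, U b + X b * (C b - C a) ≤ U a := by
  have := Fintype.ofFinite ι
  obtain ⟨U, hU⟩ := exists_isTruthfulUtilityOn hmono Finset.univ
  obtain ⟨m, hm⟩ := (Set.finite_range U).bddBelow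
  refine ⟨fun a => U a - m, fun a => sub_nonneg.2 (hm ⟨a, rfl⟩), fun a b => ?_⟩
  linarith [hU a (Finset.mem_univ a) b (Finset.mem_univ b)]

theorem le_of_truthful_payment {P : ι → ℝ} (hP : ∀ a b, P b - X b * C a ≤ P a - X a * C a)
    {a b : ι} (h : C b < C a) : X a ≤ X b := by
  nlinarith [hP a b, hP b a]

theorem exists_truthful_payment [Finite ι] (hC : ∀ a, 0 ≤ C a) (hX : ∀ a, 0 ≤ X a)
    (hmono : ∀ a b, C b < C a → X a ≤ X b) :
    ∃ P : ι → ℝ, (∀ a, 0 ≤ P a) ∧ (∀ a b, P b - X b * C a ≤ P a - X a * C a) ∧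
      ∀ a, 0 ≤ P a - X a * C a := by
  obtain ⟨U, hU0, hU⟩ := exists_nonneg_truthful_utility hmono
  refine ⟨fun a => U a + X a * C a, fun a => ?_, fun a b => ?_, fun a => ?_⟩
  · nlinarith [hU0 a, hC a, hX a]
  · linarith [hU a b]
  · simpa using hU0 a

end SingleAgent

theorem stmt2 (n k : ℕ)
    (c : Fin n → (Fin n → Fin k) → ℝ) (hc : ∀ i s, 0 < c i s)
    (x : Fin n → (Fin n → Fin k) → ℝ)
    (hx01 : ∀ i s, 0 ≤ x i s ∧ x i s ≤ 1) :
    (∃ p : Fin n → (Fin n → Fin k) → ℝ,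
      (∀ i s, 0 ≤ p i s) ∧
      (∀ (s : Fin n → Fin k) (i : Fin n) (b : Fin k),
        p i (Function.update s i b) - x i (Function.update s i b) * c i s
          ≤ p i s - x i s * c i s) ∧
      (∀ (s : Fin n → Fin k) (i : Fin n), 0 ≤ p i s - x i s * c i s)) ↔
    (∀ (i : Fin n) (s : Fin n → Fin k) (a b : Fin k),
      c i (Function.update s i b) < c i (Function.update s i a) →
      x i (Function.update s i a) ≤ x i (Function.update s i b)) := by
  constructor
  · rintro ⟨p, -, hIC, -⟩ i s a b hab
    refine le_of_truthful_payment (C := fun a => c i (update s i a))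
      (X := fun a => x i (update s i a)) (P := fun a => p i (update s i a)) (fun a b => ?_) hab
    simpa using hIC (update s i a) i b
  · intro hmono
    obtain rfl | hk := Nat.eq_zero_or_pos k
    · exact ⟨0, fun _ _ => le_rfl, fun s i => (s i).elim0, fun s i => (s i).elim0⟩
    choose P hP0 hIC hIR using fun i (t : Fin n → Fin k) =>
      exists_truthful_payment (fun a => (hc i (update t i a)).le) (fun a => (hx01 i _).1)
        (hmono i t)
    -- the payment may depend only on the others' signals: reset agent `i`'s own to `0`
    refine ⟨fun i s => P i (update s i ⟨0, hk⟩) (s i), fun i s => hP0 _ _ _,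
      fun s i b => ?_, fun s i => ?_⟩
    · simpa using hIC i (update s i ⟨0, hk⟩) (s i) b
    · simpa using hIR i (update s i ⟨0, hk⟩) (s i)
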